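/- arXiv:2205.12077 — 2 statements merged into one kernel-verified Lean document; each statement's English description precedes it below -/
import Mathlib

section
/- Assume λ = 0, δ > 1 and ρ > 0, and for each P > 0 let (β*(P), τ*(P)) be the unique saddle point of max_{β ≥ 0} min_{τ > 0} D(β,τ) with parameter P. Then, as P → ∞, τ*(P) converges to √(ρ/(δ − 1)) and β*(P) converges to 2√(ρ(δ − 1)). -/
open MeasureTheory ProbabilityTheory Filter

noncomputable section

/-- Standard Gaussian `N(0,1)` measure on `ℝ`. -/
def stdGaussian : Measure ℝ := ProbabilityTheory.gaussianReal 0 1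

/-- `Yfun P lam β τ = (β/α)·(E[(H − √P·α)²·1{H ≥ √P·α}] − 1/2)` with `α = 1/τ + 2λ/β`. -/
def Yfun (P lam β τ : ℝ) : ℝ :=
  (β / (1 / τ + 2 * lam / β)) *
    ((∫ h in Set.Ici (Real.sqrt P * (1 / τ + 2 * lam / β)),
        (h - Real.sqrt P * (1 / τ + 2 * lam / β)) ^ 2 ∂stdGaussian) - 1 / 2)

/-- `D(β,τ) = τβδ/2 + ρβ/(2τ) − β²/4 + Y(β,τ)`, with the convention `D(0,τ) = 0`. -/
def Dfun (δ ρ P lam β τ : ℝ) : ℝ :=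
  if β = 0 then 0
  else τ * β * δ / 2 + ρ * β / (2 * τ) - β ^ 2 / 4 + Yfun P lam β τ

/-- `(βs, τs)` is a saddle point of `max_{β ≥ 0} min_{τ > 0} D(β, τ)`:
`D(β,τs) ≤ D(βs,τs) ≤ D(βs,τ)` for all `β ≥ 0` and `τ > 0`. -/
def IsSaddle (δ ρ P lam βs τs : ℝ) : Prop :=
  0 ≤ βs ∧ 0 < τs ∧
  (∀ β, 0 ≤ β → Dfun δ ρ P lam β τs ≤ Dfun δ ρ P lam βs τs) ∧
  (∀ τ, 0 < τ → Dfun δ ρ P lam βs τs ≤ Dfun δ ρ P lam βs τ)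

end

open Set Topology

/-!
For `λ = 0` the objective is `D(β,τ) = β a(τ) - β²/4 + β τ g(√P/τ)`, where
`a(τ) = τ(δ-1)/2 + ρ/(2τ)` and `g(x) = E[(H - x)²; H ≥ x]`; moreover `a(τ)² = s² + b(τ)²` with
`s = √(ρ(δ-1))` and `b(τ) = τ(δ-1)/2 - ρ/(2τ)`. Testing the saddle inequalities against
`β = 2a(τ*)` and `τ = t₀ = √(ρ/(δ-1))`, where `a(t₀) = s`, gives
`(β*/2 - s)² + b(τ*)² ≤ β* t₀ g(√P/t₀)`. The Gaussian tail `g(√P/t₀)` tends to `0`, which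
forces `β* → 2s` and `b(τ*) → 0`; finally `τ*` is the positive root of
`(δ-1)τ² - 2b(τ*)τ - ρ`, a continuous function of `b(τ*)`.
-/

noncomputable def gaussianTailMoment (x : ℝ) : ℝ := ∫ h in Ici x, (h - x) ^ 2 ∂stdGaussian

lemma gaussianTailMoment_nonneg (x : ℝ) : 0 ≤ gaussianTailMoment x :=
  setIntegral_nonneg measurableSet_Ici fun _ _ ↦ sq_nonneg _

lemma integrable_sq_sub_stdGaussian (c : ℝ) :
    Integrable (fun h ↦ (h - c) ^ 2) stdGaussian :=
  ((memLp_id_gaussianReal 2).sub (memLp_const c)).integrable_sq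

lemma integrable_sq_stdGaussian : Integrable (fun h : ℝ ↦ h ^ 2) stdGaussian := by
  simpa using integrable_sq_sub_stdGaussian 0

lemma gaussianTailMoment_le_setIntegral_sq {x : ℝ} (hx : 0 ≤ x) :
    gaussianTailMoment x ≤ ∫ h in Ici x, h ^ 2 ∂stdGaussian := by
  refine setIntegral_mono_on (integrable_sq_sub_stdGaussian x).integrableOn
    integrable_sq_stdGaussian.integrableOn measurableSet_Ici
    fun h (hh : x ≤ h) ↦ ?_
  nlinarith

lemma tendsto_setIntegral_Ici_sq_stdGaussian :
    Tendsto (fun x ↦ ∫ h in Ici x, h ^ 2 ∂stdGaussian) atTop (𝓝 0) := by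
  have hInter : ⋂ x : ℝ, Ici x = ∅ :=
    eq_empty_of_forall_notMem fun h hh ↦
      (mem_iInter.mp hh (h + 1) : h + 1 ≤ h).not_gt (lt_add_one h)
  simpa [hInter] using tendsto_setIntegral_of_antitone (fun _ ↦ measurableSet_Ici)
    (fun _ _ hxy ↦ Ici_subset_Ici.mpr hxy)
    ⟨0, integrable_sq_stdGaussian.integrableOn⟩

lemma tendsto_gaussianTailMoment_atTop : Tendsto gaussianTailMoment atTop (𝓝 0) :=
  squeeze_zero' (.of_forall gaussianTailMoment_nonneg)
    ((eventually_ge_atTop 0).mono fun _ ↦ gaussianTailMoment_le_setIntegral_sq)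
    tendsto_setIntegral_Ici_sq_stdGaussian

lemma Dfun_lam_zero (δ ρ P β τ : ℝ) :
    Dfun δ ρ P 0 β τ = β * (τ * (δ - 1) / 2 + ρ / (2 * τ)) - β ^ 2 / 4
      + β * τ * gaussianTailMoment (√P / τ) := by
  rcases eq_or_ne β 0 with rfl | hβ
  · simp [Dfun]
  · rw [Dfun, if_neg hβ, Yfun, gaussianTailMoment, mul_zero, zero_div, add_zero, one_div,
      div_inv_eq_mul, ← div_eq_mul_inv]
    ring

lemma sqrt_mul_eq_mul_sqrt_div (ρ : ℝ) {c : ℝ} (hc : 0 < c) : √(ρ * c) = c * √(ρ / c) := by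
  rw [show ρ * c = c ^ 2 * (ρ / c) by field_simp, Real.sqrt_mul (sq_nonneg c),
    Real.sqrt_sq hc.le]

lemma eq_positive_root_of_pos {δ ρ τ : ℝ} (hδ : 1 < δ) (hρ : 0 ≤ ρ) (hτ : 0 < τ) :
    τ = ((τ * (δ - 1) / 2 - ρ / (2 * τ)) + √((τ * (δ - 1) / 2 - ρ / (2 * τ)) ^ 2 + ρ * (δ - 1)))
      / (δ - 1) := by
  have hsq : (τ * (δ - 1) / 2 - ρ / (2 * τ)) ^ 2 + ρ * (δ - 1)
      = (τ * (δ - 1) / 2 + ρ / (2 * τ)) ^ 2 := by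
    field_simp
    ring
  have hd : 0 < δ - 1 := sub_pos.mpr hδ
  rw [hsq, Real.sqrt_sq (by positivity)]
  field_simp
  ring

namespace IsSaddle

variable {δ ρ P β τ : ℝ}

lemma sq_le_value (h : IsSaddle δ ρ P 0 β τ) (hδ : 1 ≤ δ) (hρ : 0 ≤ ρ) :
    (τ * (δ - 1) / 2 + ρ / (2 * τ)) ^ 2 ≤ Dfun δ ρ P 0 β τ := by
  obtain ⟨-, hτ, hmax, -⟩ := h
  set a := τ * (δ - 1) / 2 + ρ / (2 * τ) with ha_def
  have ha : 0 ≤ a := by have := sub_nonneg.mpr hδ; positivity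
  have h2a := hmax (2 * a) (by positivity)
  rw [Dfun_lam_zero, ← ha_def] at h2a
  nlinarith [mul_nonneg (mul_nonneg ha hτ.le) (gaussianTailMoment_nonneg (√P / τ))]

lemma sq_add_sq_le (h : IsSaddle δ ρ P 0 β τ) (hδ : 1 < δ) (hρ : 0 < ρ) :
    (β / 2 - √(ρ * (δ - 1))) ^ 2 + (τ * (δ - 1) / 2 - ρ / (2 * τ)) ^ 2
      ≤ β * √(ρ / (δ - 1)) * gaussianTailMoment (√P / √(ρ / (δ - 1))) := by
  have hd : 0 < δ - 1 := sub_pos.mpr hδ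
  set t₀ := √(ρ / (δ - 1))
  have ht₀ : 0 < t₀ := Real.sqrt_pos.mpr (div_pos hρ hd)
  have hs : √(ρ * (δ - 1)) = (δ - 1) * t₀ := sqrt_mul_eq_mul_sqrt_div ρ hd
  have ht₀sq : t₀ ^ 2 = ρ / (δ - 1) := Real.sq_sqrt (div_pos hρ hd).le
  have hτ : τ ≠ 0 := h.2.1.ne'
  have lower := h.sq_le_value hδ.le hρ.le
  have upper := h.2.2.2 t₀ ht₀
  rw [Dfun_lam_zero δ ρ P β t₀] at upper
  have hcoef : t₀ * (δ - 1) / 2 + ρ / (2 * t₀) = (δ - 1) * t₀ := by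
    field_simp
    rw [ht₀sq]
    field_simp
    ring
  have hpyth : (τ * (δ - 1) / 2 + ρ / (2 * τ)) ^ 2
      = ((δ - 1) * t₀) ^ 2 + (τ * (δ - 1) / 2 - ρ / (2 * τ)) ^ 2 := by
    rw [mul_pow, ht₀sq]
    field_simp
    ring
  rw [hcoef] at upper
  rw [hs]
  nlinarith

end IsSaddle

lemma tendsto_of_tendsto_sq_sub {α : Type*} {l : Filter α} {f : α → ℝ} {c : ℝ}
    (h : Tendsto (fun i ↦ (f i - c) ^ 2) l (𝓝 0)) : Tendsto f l (𝓝 c) := by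
  rw [tendsto_iff_norm_sub_tendsto_zero]
  simpa [Real.sqrt_sq_eq_abs] using h.sqrt

lemma tendsto_of_sq_sub_le {α : Type*} {l : Filter α} {x ε : α → ℝ} {s : ℝ}
    (hε : Tendsto ε l (𝓝 0)) (h : ∀ᶠ i in l, (x i - s) ^ 2 ≤ 2 * x i * ε i) :
    Tendsto x l (𝓝 s) := by
  have hbound : ∀ᶠ i in l, (x i - s) ^ 2 ≤ 4 * ε i * (ε i + s) :=
    h.mono fun i hi ↦ by nlinarith [sq_nonneg (x i - s - 2 * ε i)]
  refine tendsto_of_tendsto_sq_sub (squeeze_zero' (.of_forall fun _ ↦ sq_nonneg _) hbound ?_)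
  simpa using (hε.const_mul 4).mul (hε.add_const s)

/-- for `λ = 0` and `δ > 1`, as `P → ∞`, `τ*(P) → √(ρ/(δ−1))` and
`β*(P) → 2√(ρ(δ−1))`. -/
theorem saddle_point_limit_P_infty_ZF (δ ρ : ℝ)
    (hδ : 1 < δ) (hρ : 0 < ρ)
    (βs τs : ℝ → ℝ)
    (hsad : ∀ P : ℝ, 0 < P → IsSaddle δ ρ P 0 (βs P) (τs P)) :
    Tendsto τs atTop (nhds (Real.sqrt (ρ / (δ - 1)))) ∧
    Tendsto βs atTop (nhds (2 * Real.sqrt (ρ * (δ - 1)))) := by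
  have hd : 0 < δ - 1 := sub_pos.mpr hδ
  have ht₀ : 0 < √(ρ / (δ - 1)) := Real.sqrt_pos.mpr (div_pos hρ hd)
  set ε : ℝ → ℝ := fun P ↦ √(ρ / (δ - 1)) * gaussianTailMoment (√P / √(ρ / (δ - 1)))
  set skew : ℝ → ℝ := fun P ↦ τs P * (δ - 1) / 2 - ρ / (2 * τs P)
  have hε : Tendsto ε atTop (𝓝 0) := by
    simpa using (tendsto_gaussianTailMoment_atTop.comp
      (Real.tendsto_sqrt_atTop.atTop_div_const ht₀)).const_mul √(ρ / (δ - 1))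
  have hkey : ∀ᶠ P in atTop,
      (βs P / 2 - √(ρ * (δ - 1))) ^ 2 + skew P ^ 2 ≤ 2 * (βs P / 2) * ε P :=
    (eventually_gt_atTop 0).mono fun P hP ↦ by
      simp only [ε, skew]
      linarith [(hsad P hP).sq_add_sq_le hδ hρ]
  have hβ : Tendsto (fun P ↦ βs P / 2) atTop (𝓝 √(ρ * (δ - 1))) :=
    tendsto_of_sq_sub_le hε (hkey.mono fun P h ↦ by nlinarith [sq_nonneg (skew P)])
  have hskew : Tendsto skew atTop (𝓝 0) := by
    refine tendsto_of_tendsto_sq_sub (squeeze_zero' (.of_forall fun _ ↦ sq_nonneg _)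
      (hkey.mono fun P h ↦ ?_) (by simpa using (hβ.const_mul 2).mul hε))
    nlinarith [sq_nonneg (βs P / 2 - √(ρ * (δ - 1)))]
  refine ⟨?_, by simpa [mul_div_cancel₀] using hβ.const_mul 2⟩
  have hτ := (hskew.add ((hskew.pow 2).add_const (ρ * (δ - 1))).sqrt).div_const (δ - 1)
  rw [zero_pow two_ne_zero, zero_add, zero_add, sqrt_mul_eq_mul_sqrt_div ρ hd,
    mul_div_cancel_left₀ _ hd.ne'] at hτ
  exact hτ.congr' ((eventually_gt_atTop 0).mono fun P hP ↦
    (eq_positive_root_of_pos hδ hρ.le (hsad P hP).2.1).symm)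
end

section
/- Assume λ > 0, ρ > 0 and P > 0, and for each δ > 0 let (β*(δ), τ*(δ)) be the unique saddle point of max_{β ≥ 0} min_{τ > 0} D(β,τ) with parameter δ. Then, as δ → 0⁺, the ratio τ*(δ)/√(ρ/δ) converges to 1 and the ratio β*(δ)·(1 + 1/λ)/(2√(ρδ)) converges to 1. -/
open MeasureTheory ProbabilityTheory Filter

/-!
Write `D(β, τ) = β A(τ) - β²/4 + Y(β, τ)` with `A(τ) = τδ/2 + ρ/(2τ) ≥ √(ρδ)`, with equality at
`τ = √(ρ/δ)`. The Gaussian tail `ε(x) = E[(H - x)² 1{H ≥ x}]` satisfies `0 ≤ ε(x) ≤ 1/2` and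
`ε(x) ≤ E[H⁴]/x²`, so `-β²/(4λ) ≤ Y ≤ -β²/(4λ) + O(β³/τ + β⁴)`. Put `k = 1 + 1/λ`. Maximizing
over `β` at `τ*` bounds the saddle value below by `A(τ*)²/k`; evaluating at `τ = √(ρ/δ)` bounds it
above by `β*√(ρδ) - kβ*²/4 + O(ρδ²)`, where `β* ≤ 4√(ρδ)` comes from the crude bound `Y ≤ 0`.
Dividing by `ρδ/k` gives `(A(τ*)²/(ρδ) - 1) + (kβ*/(2√(ρδ)) - 1)² = O(δ)`, and
`A(τ*)/√(ρδ) = (w + w⁻¹)/2` with `w = τ*/√(ρ/δ)`, which forces `w → 1`.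
-/

open Real
open scoped NNReal

lemma two_le_add_inv {K : Type*} [Field K] [LinearOrder K] [IsStrictOrderedRing K] {w : K}
    (hw : 0 < w) : 2 ≤ w + w⁻¹ := by
  have : 0 ≤ (w - 1) ^ 2 / w := by positivity
  have e : (w - 1) ^ 2 / w = w + w⁻¹ - 2 := by field_simp; ring
  linarith

lemma sq_sub_one_le_of_half_add_inv_sq_le {w q : ℝ} (hw : 0 < w)
    (h : ((w + w⁻¹) / 2) ^ 2 ≤ 1 + q) : (w - 1) ^ 2 ≤ q * (2 + q) := by
  have ha := two_le_add_inv hw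
  have hq : 0 ≤ q := by nlinarith
  have hsum : w + w⁻¹ ≤ 2 + q := by nlinarith
  calc (w - 1) ^ 2 = w * (w + w⁻¹ - 2) := by field_simp; ring
    _ ≤ (w + w⁻¹) * q :=
      mul_le_mul (le_add_of_nonneg_right (inv_pos.mpr hw).le) (by linarith) (by linarith)
        (by linarith)
    _ ≤ (2 + q) * q := by gcongr
    _ = q * (2 + q) := mul_comm _ _

lemma sqrt_div_eq_sqrt_mul_div {ρ δ : ℝ} (hδ : 0 < δ) : √(ρ / δ) = √(ρ * δ) / δ := by
  rw [show ρ / δ = ρ * δ / δ ^ 2 by field_simp, sqrt_div' _ (sq_nonneg δ), sqrt_sq hδ.le]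

lemma tendsto_nhds_one_of_sq_sub_one_le {α : Type*} {l : Filter α} {f g : α → ℝ}
    (hg : Tendsto g l (nhds 0)) (h : ∀ᶠ x in l, (f x - 1) ^ 2 ≤ g x) : Tendsto f l (nhds 1) := by
  rw [tendsto_iff_norm_sub_tendsto_zero]
  refine squeeze_zero_norm' (h.mono fun x hx => ?_) (by simpa using hg.sqrt)
  simpa using abs_le_sqrt hx

lemma integrable_pow_gaussianReal (μ : ℝ) (v : ℝ≥0) (n : ℕ) :
    Integrable (fun x : ℝ => x ^ n) (gaussianReal μ v) :=
  (memLp_id_gaussianReal (μ := μ) (v := v) n).integrable_norm_pow'.mono' (by fun_prop)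
    (ae_of_all _ fun x => by simp)

lemma integral_sq_gaussianReal_zero (v : ℝ≥0) : ∫ x, x ^ 2 ∂gaussianReal 0 v = v := by
  simpa [variance_eq_integral measurable_id'.aemeasurable, integral_id_gaussianReal]
    using variance_fun_id_gaussianReal (μ := 0) (v := v)

lemma setIntegral_Ici_sq_gaussianReal_zero {v : ℝ≥0} (hv : v ≠ 0) :
    ∫ x in Set.Ici 0, x ^ 2 ∂gaussianReal 0 v = v / 2 := by
  have := nullSingletonClass_gaussianReal (μ := 0) hv
  have hsymm : ∫ x in Set.Iio 0, x ^ 2 ∂gaussianReal 0 v =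
      ∫ x in Set.Ici 0, x ^ 2 ∂gaussianReal 0 v := by
    rw [← integral_Iic_eq_integral_Iio]
    conv_rhs => rw [← neg_zero, ← gaussianReal_map_neg]
    rw [setIntegral_map measurableSet_Ici (by fun_prop) (by fun_prop)]
    simp
  have := integral_add_compl (measurableSet_Ici (a := 0)) (integrable_pow_gaussianReal 0 v 2)
  rw [Set.compl_Ici, hsymm, integral_sq_gaussianReal_zero] at this
  linarith

noncomputable def gaussTail (x : ℝ) : ℝ := ∫ h in Set.Ici x, (h - x) ^ 2 ∂gaussianReal 0 1

noncomputable def gaussMoment4 : ℝ := ∫ h, h ^ 4 ∂gaussianReal 0 1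

lemma gaussMoment4_nonneg : 0 ≤ gaussMoment4 :=
  integral_nonneg fun _ => by positivity

lemma gaussTail_nonneg (x : ℝ) : 0 ≤ gaussTail x :=
  setIntegral_nonneg measurableSet_Ici fun _ _ => by positivity

lemma gaussTail_le_setIntegral_sq {x : ℝ} (hx : 0 ≤ x) :
    gaussTail x ≤ ∫ h in Set.Ici x, h ^ 2 ∂gaussianReal 0 1 := by
  have hint : Integrable (fun h : ℝ => (h - x) ^ 2) (gaussianReal 0 1) :=
    ((memLp_id_gaussianReal 2).sub (memLp_const x)).integrable_sq
  refine setIntegral_mono_on hint.integrableOn (integrable_pow_gaussianReal 0 1 2).integrableOn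
    measurableSet_Ici fun h (hh : x ≤ h) => ?_
  nlinarith

lemma gaussTail_le_half {x : ℝ} (hx : 0 ≤ x) : gaussTail x ≤ 1 / 2 := by
  calc gaussTail x ≤ ∫ h in Set.Ici x, h ^ 2 ∂gaussianReal 0 1 := gaussTail_le_setIntegral_sq hx
    _ ≤ ∫ h in Set.Ici 0, h ^ 2 ∂gaussianReal 0 1 :=
      setIntegral_mono_set (integrable_pow_gaussianReal 0 1 2).integrableOn
        (ae_of_all _ fun _ => sq_nonneg _) (Set.Ici_subset_Ici.mpr hx).eventuallyLE
    _ = 1 / 2 := by simpa using setIntegral_Ici_sq_gaussianReal_zero one_ne_zero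

lemma gaussTail_le_div_sq {x : ℝ} (hx : 0 < x) : gaussTail x ≤ gaussMoment4 / x ^ 2 := by
  calc gaussTail x ≤ ∫ h in Set.Ici x, h ^ 2 ∂gaussianReal 0 1 := gaussTail_le_setIntegral_sq hx.le
    _ ≤ ∫ h in Set.Ici x, h ^ 4 / x ^ 2 ∂gaussianReal 0 1 := by
      refine setIntegral_mono_on (integrable_pow_gaussianReal 0 1 2).integrableOn
        ((integrable_pow_gaussianReal 0 1 4).div_const _).integrableOn measurableSet_Ici
        fun h (hh : x ≤ h) => ?_
      rw [le_div_iff₀ (by positivity)]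
      have : x ^ 2 ≤ h ^ 2 := pow_le_pow_left₀ hx.le hh 2
      nlinarith [sq_nonneg h]
    _ ≤ ∫ h, h ^ 4 / x ^ 2 ∂gaussianReal 0 1 :=
      setIntegral_le_integral ((integrable_pow_gaussianReal 0 1 4).div_const _)
        (ae_of_all _ fun _ => by positivity)
    _ = gaussMoment4 / x ^ 2 := integral_div _ _

section Yfun

noncomputable def alpha (lam β τ : ℝ) : ℝ := 1 / τ + 2 * lam / β

lemma Yfun_eq_gaussTail (P lam β τ : ℝ) :
    Yfun P lam β τ = β / alpha lam β τ * (gaussTail (√P * alpha lam β τ) - 1 / 2) := rfl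

variable {P lam β τ : ℝ} (hlam : 0 < lam) (hβ : 0 < β) (hτ : 0 < τ)
include hlam hβ hτ

lemma alpha_pos : 0 < alpha lam β τ := by unfold alpha; positivity

lemma div_alpha_le : β / alpha lam β τ ≤ β ^ 2 / (2 * lam) := by
  calc β / alpha lam β τ ≤ β / (2 * lam / β) :=
        div_le_div_of_nonneg_left hβ.le (by positivity) (le_add_of_nonneg_left (by positivity))
    _ = β ^ 2 / (2 * lam) := by field_simp

lemma sub_le_div_alpha : β ^ 2 / (2 * lam) - β ^ 3 / (4 * lam ^ 2 * τ) ≤ β / alpha lam β τ := by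
  have hid : β / alpha lam β τ - (β ^ 2 / (2 * lam) - β ^ 3 / (4 * lam ^ 2 * τ))
      = β ^ 4 / (4 * lam ^ 2 * τ * (β + 2 * lam * τ)) := by
    unfold alpha
    field_simp
    ring
  have : 0 ≤ β ^ 4 / (4 * lam ^ 2 * τ * (β + 2 * lam * τ)) := by positivity
  linarith

lemma neg_le_Yfun : -(β ^ 2 / (4 * lam)) ≤ Yfun P lam β τ := by
  have := div_alpha_le hlam hβ hτ
  have := mul_nonneg (div_pos hβ (alpha_pos hlam hβ hτ)).le
    (gaussTail_nonneg (√P * alpha lam β τ))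
  have e : β ^ 2 / (4 * lam) = β ^ 2 / (2 * lam) / 2 := by ring
  rw [Yfun_eq_gaussTail, mul_sub]
  linarith

lemma Yfun_nonpos : Yfun P lam β τ ≤ 0 := by
  have hα := alpha_pos hlam hβ hτ
  rw [Yfun_eq_gaussTail]
  exact mul_nonpos_of_nonneg_of_nonpos (by positivity)
    (by linarith [gaussTail_le_half (by positivity : 0 ≤ √P * alpha lam β τ)])

lemma Yfun_le_neg_add (hP : 0 < P) : Yfun P lam β τ ≤
    -(β ^ 2 / (4 * lam)) + β ^ 3 / (8 * lam ^ 2 * τ) +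
      gaussMoment4 * β ^ 4 / (8 * P * lam ^ 3) := by
  have hα := alpha_pos hlam hβ hτ
  have htail : gaussTail (√P * alpha lam β τ) ≤ gaussMoment4 * β ^ 2 / (4 * P * lam ^ 2) := by
    have hα2 : P * (2 * lam / β) ^ 2 ≤ (√P * alpha lam β τ) ^ 2 := by
      rw [mul_pow, sq_sqrt hP.le]
      gcongr
      exact le_add_of_nonneg_left (by positivity)
    calc gaussTail (√P * alpha lam β τ) ≤ gaussMoment4 / (√P * alpha lam β τ) ^ 2 :=
          gaussTail_le_div_sq (by positivity)
      _ ≤ gaussMoment4 / (P * (2 * lam / β) ^ 2) :=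
        div_le_div_of_nonneg_left gaussMoment4_nonneg (by positivity) hα2
      _ = gaussMoment4 * β ^ 2 / (4 * P * lam ^ 2) := by field_simp; ring
  have h1 : β / alpha lam β τ * gaussTail (√P * alpha lam β τ) ≤
      β ^ 2 / (2 * lam) * (gaussMoment4 * β ^ 2 / (4 * P * lam ^ 2)) :=
    mul_le_mul (div_alpha_le hlam hβ hτ) htail (gaussTail_nonneg _) (by positivity)
  have h2 := sub_le_div_alpha hlam hβ hτ
  have e1 : β ^ 2 / (2 * lam) * (gaussMoment4 * β ^ 2 / (4 * P * lam ^ 2))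
      = gaussMoment4 * β ^ 4 / (8 * P * lam ^ 3) := by ring
  have e2 : β ^ 3 / (8 * lam ^ 2 * τ) = β ^ 3 / (4 * lam ^ 2 * τ) / 2 := by ring
  have e3 : β ^ 2 / (4 * lam) = β ^ 2 / (2 * lam) / 2 := by ring
  rw [Yfun_eq_gaussTail, mul_sub]
  linarith

end Yfun

noncomputable def Dslope (δ ρ τ : ℝ) : ℝ := τ * δ / 2 + ρ / (2 * τ)

lemma Dslope_eq {δ ρ τ : ℝ} (hρ : 0 < ρ) (hδ : 0 < δ) (hτ : 0 < τ) :
    Dslope δ ρ τ = √(ρ * δ) * ((τ / √(ρ / δ) + (τ / √(ρ / δ))⁻¹) / 2) := by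
  rw [sqrt_div_eq_sqrt_mul_div hδ, Dslope]
  field_simp
  rw [sq_sqrt (by positivity)]
  ring

lemma sqrt_mul_le_Dslope {δ ρ τ : ℝ} (hρ : 0 < ρ) (hδ : 0 < δ) (hτ : 0 < τ) :
    √(ρ * δ) ≤ Dslope δ ρ τ := by
  rw [Dslope_eq hρ hδ hτ]
  have := two_le_add_inv (show 0 < τ / √(ρ / δ) by positivity)
  nlinarith [sqrt_nonneg (ρ * δ)]

lemma Dslope_sqrt_div {δ ρ : ℝ} (hρ : 0 < ρ) (hδ : 0 < δ) : Dslope δ ρ √(ρ / δ) = √(ρ * δ) := by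
  rw [Dslope_eq hρ hδ (by positivity), div_self (by positivity)]
  norm_num

lemma Dfun_zero (δ ρ P lam τ : ℝ) : Dfun δ ρ P lam 0 τ = 0 := if_pos rfl

lemma Dfun_eq_of_ne {δ ρ P lam β τ : ℝ} (hβ : β ≠ 0) :
    Dfun δ ρ P lam β τ = β * Dslope δ ρ τ - β ^ 2 / 4 + Yfun P lam β τ := by
  rw [Dfun, if_neg hβ, Dslope]
  ring

section Dfun

variable {δ ρ P lam β τ : ℝ} (hlam : 0 < lam) (hβ : 0 < β) (hτ : 0 < τ)
include hlam hβ hτ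

lemma quadratic_le_Dfun :
    β * Dslope δ ρ τ - (1 + 1 / lam) * β ^ 2 / 4 ≤ Dfun δ ρ P lam β τ := by
  have := neg_le_Yfun (P := P) hlam hβ hτ
  have e : (1 + 1 / lam) * β ^ 2 / 4 = β ^ 2 / 4 + β ^ 2 / (4 * lam) := by field_simp
  rw [Dfun_eq_of_ne hβ.ne']
  linarith

lemma Dfun_le_of_Yfun_nonpos : Dfun δ ρ P lam β τ ≤ β * Dslope δ ρ τ - β ^ 2 / 4 := by
  have := Yfun_nonpos (P := P) hlam hβ hτ
  rw [Dfun_eq_of_ne hβ.ne']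
  linarith

lemma Dfun_le_quadratic_add (hP : 0 < P) :
    Dfun δ ρ P lam β τ ≤ β * Dslope δ ρ τ - (1 + 1 / lam) * β ^ 2 / 4 +
      (β ^ 3 / (8 * lam ^ 2 * τ) + gaussMoment4 * β ^ 4 / (8 * P * lam ^ 3)) := by
  have := Yfun_le_neg_add hlam hβ hτ hP
  have e : (1 + 1 / lam) * β ^ 2 / 4 = β ^ 2 / 4 + β ^ 2 / (4 * lam) := by field_simp
  rw [Dfun_eq_of_ne hβ.ne']
  linarith

end Dfun

noncomputable def remainderConst (ρ P lam : ℝ) : ℝ :=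
  8 / lam ^ 2 + 32 * gaussMoment4 * ρ / (P * lam ^ 3)

lemma remainder_le {δ ρ P lam β : ℝ} (hρ : 0 < ρ) (hP : 0 < P) (hlam : 0 < lam) (hδ : 0 < δ)
    (hβ : 0 ≤ β) (hβs : β ≤ 4 * √(ρ * δ)) :
    β ^ 3 / (8 * lam ^ 2 * √(ρ / δ)) + gaussMoment4 * β ^ 4 / (8 * P * lam ^ 3) ≤
      remainderConst ρ P lam * (ρ * δ) * δ := by
  set s := √(ρ * δ)
  have hs2 : s ^ 2 = ρ * δ := sq_sqrt (by positivity)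
  rw [sqrt_div_eq_sqrt_mul_div hδ]
  have h3 : β ^ 3 / (8 * lam ^ 2 * (s / δ)) ≤ 8 / lam ^ 2 * (ρ * δ) * δ := by
    calc β ^ 3 / (8 * lam ^ 2 * (s / δ)) ≤ (4 * s) ^ 3 / (8 * lam ^ 2 * (s / δ)) := by gcongr
      _ = 8 / lam ^ 2 * (ρ * δ) * δ := by rw [← hs2]; field_simp; ring
  have h4 : gaussMoment4 * β ^ 4 / (8 * P * lam ^ 3) ≤
      32 * gaussMoment4 * ρ / (P * lam ^ 3) * (ρ * δ) * δ := by
    have := gaussMoment4_nonneg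
    calc gaussMoment4 * β ^ 4 / (8 * P * lam ^ 3)
        ≤ gaussMoment4 * (4 * s) ^ 4 / (8 * P * lam ^ 3) := by gcongr
      _ = 32 * gaussMoment4 * ρ / (P * lam ^ 3) * (ρ * δ) * δ := by
        rw [show (4 * s) ^ 4 = 256 * (s ^ 2) ^ 2 by ring, hs2]; field_simp; ring
  rw [remainderConst]
  linarith

noncomputable def saddleConst (ρ P lam : ℝ) : ℝ := (1 + 1 / lam) * remainderConst ρ P lam

section IsSaddle

variable {δ ρ P lam b t : ℝ} (hρ : 0 < ρ) (hlam : 0 < lam) (hδ : 0 < δ)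
include hρ hlam hδ

lemma IsSaddle.Dslope_sq_div_le_value (hsad : IsSaddle δ ρ P lam b t) :
    Dslope δ ρ t ^ 2 / (1 + 1 / lam) ≤ Dfun δ ρ P lam b t := by
  obtain ⟨-, ht, hmax, -⟩ := hsad
  set k := 1 + 1 / lam
  have hβ : 0 < 2 * Dslope δ ρ t / k := by unfold Dslope; positivity
  calc Dslope δ ρ t ^ 2 / k
      = 2 * Dslope δ ρ t / k * Dslope δ ρ t - k * (2 * Dslope δ ρ t / k) ^ 2 / 4 := by
        field_simp; ring
    _ ≤ Dfun δ ρ P lam (2 * Dslope δ ρ t / k) t := quadratic_le_Dfun hlam hβ ht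
    _ ≤ Dfun δ ρ P lam b t := hmax _ hβ.le

lemma IsSaddle.mul_div_le_value (hsad : IsSaddle δ ρ P lam b t) :
    ρ * δ / (1 + 1 / lam) ≤ Dfun δ ρ P lam b t := by
  refine le_trans ?_ (hsad.Dslope_sq_div_le_value hρ hlam hδ)
  rw [← sq_sqrt (by positivity : 0 ≤ ρ * δ)]
  gcongr
  exact sqrt_mul_le_Dslope hρ hδ hsad.2.1

lemma IsSaddle.pos (hsad : IsSaddle δ ρ P lam b t) : 0 < b := by
  refine hsad.1.lt_of_ne fun hb => ?_
  have := hsad.mul_div_le_value hρ hlam hδ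
  rw [← hb, Dfun_zero] at this
  have : 0 < ρ * δ / (1 + 1 / lam) := by positivity
  linarith

lemma IsSaddle.le_four_mul_sqrt (hsad : IsSaddle δ ρ P lam b t) : b ≤ 4 * √(ρ * δ) := by
  have hb := hsad.pos hρ hlam hδ
  have hT : 0 < √(ρ / δ) := by positivity
  have h := (hsad.mul_div_le_value hρ hlam hδ).trans <|
    (hsad.2.2.2 _ hT).trans (Dfun_le_of_Yfun_nonpos hlam hb hT)
  rw [Dslope_sqrt_div hρ hδ] at h
  have : 0 < ρ * δ / (1 + 1 / lam) := by positivity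
  nlinarith

lemma IsSaddle.deviation_le (hP : 0 < P) (hsad : IsSaddle δ ρ P lam b t) :
    ((t / √(ρ / δ) + (t / √(ρ / δ))⁻¹) / 2) ^ 2 - 1 +
      (b * (1 + 1 / lam) / (2 * √(ρ * δ)) - 1) ^ 2 ≤ saddleConst ρ P lam * δ := by
  have hb := hsad.pos hρ hlam hδ
  have hT : 0 < √(ρ / δ) := by positivity
  set s := √(ρ * δ)
  set a := (t / √(ρ / δ) + (t / √(ρ / δ))⁻¹) / 2
  set k := 1 + 1 / lam
  have hs : 0 < s := by positivity
  have hk : 0 < k := by positivity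
  have hs2 : s ^ 2 = ρ * δ := sq_sqrt (by positivity)
  have hupper := (hsad.2.2.2 _ hT).trans (Dfun_le_quadratic_add hlam hb hT hP)
  rw [Dslope_sqrt_div hρ hδ] at hupper
  have hlower := hsad.Dslope_sq_div_le_value hρ hlam hδ
  rw [Dslope_eq hρ hδ hsad.2.1] at hlower
  have hrem := remainder_le hρ hP hlam hδ hb.le (hsad.le_four_mul_sqrt hρ hlam hδ)
  have hkey : s ^ 2 * a ^ 2 ≤ s ^ 2 * (2 * (b * k / (2 * s)) - (b * k / (2 * s)) ^ 2
      + saddleConst ρ P lam * δ) := by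
    calc s ^ 2 * a ^ 2 = k * ((s * a) ^ 2 / k) := by field_simp
      _ ≤ k * (b * s - k * b ^ 2 / 4 + remainderConst ρ P lam * (ρ * δ) * δ) := by
        gcongr; linarith
      _ = _ := by
        rw [show saddleConst ρ P lam = k * remainderConst ρ P lam from rfl, ← hs2]
        field_simp
        ring
  have := le_of_mul_le_mul_left hkey (by positivity)
  nlinarith

lemma IsSaddle.sq_sub_one_le (hP : 0 < P) (hsad : IsSaddle δ ρ P lam b t) :
    (t / √(ρ / δ) - 1) ^ 2 ≤ saddleConst ρ P lam * δ * (2 + saddleConst ρ P lam * δ) ∧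
      (b * (1 + 1 / lam) / (2 * √(ρ * δ)) - 1) ^ 2 ≤ saddleConst ρ P lam * δ := by
  have h := hsad.deviation_le hρ hlam hδ hP
  have hw : 0 < t / √(ρ / δ) := div_pos hsad.2.1 (by positivity)
  have ha := two_le_add_inv hw
  exact ⟨sq_sub_one_le_of_half_add_inv_sq_le hw
    (by nlinarith [sq_nonneg (b * (1 + 1 / lam) / (2 * √(ρ * δ)) - 1)]), by nlinarith⟩

end IsSaddle

/-- for `λ > 0`, as `δ → 0⁺`, `τ*(δ)/√(ρ/δ) → 1` and
`β*(δ)(1 + 1/λ)/(2√(ρδ)) → 1`. -/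
theorem saddle_point_limit_delta_zero (ρ P lam : ℝ)
    (hρ : 0 < ρ) (hP : 0 < P) (hlam : 0 < lam)
    (βs τs : ℝ → ℝ)
    (hsad : ∀ δ : ℝ, 0 < δ → IsSaddle δ ρ P lam (βs δ) (τs δ)) :
    Tendsto (fun δ => τs δ / Real.sqrt (ρ / δ)) (nhdsWithin 0 (Set.Ioi 0)) (nhds 1) ∧
    Tendsto (fun δ => βs δ * (1 + 1 / lam) / (2 * Real.sqrt (ρ * δ)))
      (nhdsWithin 0 (Set.Ioi 0)) (nhds 1) := by
  set c := saddleConst ρ P lam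
  have hcδ : Tendsto (fun δ => c * δ) (nhdsWithin 0 (Set.Ioi 0)) (nhds 0) :=
    ((continuous_const_mul c).tendsto' 0 0 (mul_zero c)).mono_left nhdsWithin_le_nhds
  have hbounds : ∀ᶠ δ in nhdsWithin 0 (Set.Ioi 0),
      (τs δ / √(ρ / δ) - 1) ^ 2 ≤ c * δ * (2 + c * δ) ∧
        (βs δ * (1 + 1 / lam) / (2 * √(ρ * δ)) - 1) ^ 2 ≤ c * δ :=
    eventually_mem_nhdsWithin.mono fun δ hδ => (hsad δ hδ).sq_sub_one_le hρ hlam hδ hP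
  constructor
  · refine tendsto_nhds_one_of_sq_sub_one_le ?_ (hbounds.mono fun _ h => h.1)
    simpa using hcδ.mul (tendsto_const_nhds.add hcδ)
  · exact tendsto_nhds_one_of_sq_sub_one_le hcδ (hbounds.mono fun _ h => h.2)
end
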